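/- Fix integers N, M ≥ 1 and 1 ≤ K ≤ N, set L = N+M−1, and let G ∈ ℝ^{N×N} be an orthogonal matrix. Then for every nonzero vector a ∈ ℝ^N of the form a = Gq with q ∈ ℝ^N having at most K nonzero entries, ρ(a) ≤ L ν_K(G)². -/

import Mathlib

open Finset Complex Matrix

/-- Un-normalized sample autocorrelation `R_a(τ) = ∑_{i=1}^{N-τ} a_i a_{i+τ}`. -/
noncomputable def autocorr (N : ℕ) (a : Fin N → ℝ) (τ : ℕ) : ℝ :=
  ∑ i : Fin N, if h : i.1 + τ < N then a i * a ⟨i.1 + τ, h⟩ else 0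

/-- The `M × M` symmetric Toeplitz covariance matrix `P(a)` with entries `R_a(|i-j|)`. -/
noncomputable def covToeplitz (N M : ℕ) (a : Fin N → ℝ) :
    Matrix (Fin M) (Fin M) ℝ :=
  fun i j => autocorr N a (Nat.dist i.1 j.1)

/-- Entry of the unitary DFT matrix `F_L(ℓ,m) = (1/√L) e^{-2πjℓm/L}` (0-based indices). -/
noncomputable def dftEntry (L ℓ m : ℕ) : ℂ :=
  ((Real.sqrt L : ℝ) : ℂ)⁻¹ * Complex.exp (-(2 * Real.pi * Complex.I * (ℓ : ℂ) * (m : ℂ)) / (L : ℂ))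

/-- `‖F^{i→}_{1:N} G_S‖₂`. -/
noncomputable def rowCohNorm (N M : ℕ) (G : Matrix (Fin N) (Fin N) ℝ)
    (i : Fin (N + M - 1)) (S : Finset (Fin N)) : ℝ :=
  Real.sqrt (∑ s ∈ S,
    ‖∑ m : Fin N, dftEntry (N + M - 1) i.1 m.1 * (G m s : ℂ)‖ ^ 2)

/-- The `K`-sparse Fourier coherence `ν_K(G)`. -/
noncomputable def fourierCoherence (N M K : ℕ) (G : Matrix (Fin N) (Fin N) ℝ) : ℝ :=
  ⨆ i : Fin (N + M - 1), ⨆ S : {S : Finset (Fin N) // S.card = K}, rowCohNorm N M G i S.1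

/-!
Write `x̂(ℓ) = ∑ₖ xₖ ζ^{ℓk}` with `ζ = e^{-2πi/L}`. Expanding `|v̂(ℓ) â(ℓ)|²` and summing over `ℓ`,
orthogonality of the `L`-th roots of unity applies to all exponents `i + n ≤ (M - 1) + (N - 1) < L`,
so there is no wrap-around and `L · vᵀ P(a) v = ∑_ℓ |v̂(ℓ)|² |â(ℓ)|²` (for `v = a` alone this is
Parseval). Hence `vᵀ P(a) v ≤ max_ℓ |â(ℓ)|² · ‖v‖²`, and every eigenvalue of `P(a)` is at most
`max_ℓ |â(ℓ)|²`. Finally `â(ℓ) = √L ∑_{s ∈ S} q_s ⟨F_L^{ℓ→}_{1:N}, G_s⟩` with `|S| = K`, so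
Cauchy–Schwarz gives `|â(ℓ)|² ≤ L ν_K(G)² ‖q‖² = L ν_K(G)² ‖a‖²`.
-/

open ComplexConjugate

theorem IsPrimitiveRoot.sum_pow_mul_conj_pow {ζ : ℂ} {L a b : ℕ} (hζ : IsPrimitiveRoot ζ L)
    (ha : a < L) (hb : b < L) :
    ∑ ℓ ∈ range L, ζ ^ (ℓ * a) * conj (ζ ^ (ℓ * b)) = if a = b then (L : ℂ) else 0 := by
  have hL : L ≠ 0 := by omega
  have hζ0 : ζ ≠ 0 := hζ.ne_zero hL
  set r := ζ ^ a * (ζ ^ b)⁻¹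
  have hterm : ∀ ℓ, ζ ^ (ℓ * a) * conj (ζ ^ (ℓ * b)) = r ^ ℓ := fun ℓ => by
    rw [map_pow, ← Complex.inv_eq_conj (hζ.norm'_eq_one hL)]
    ring
  simp_rw [hterm]
  split_ifs with hab
  · simp [r, hab, hζ0]
  · have hr1 : r ≠ 1 := fun h =>
      hab (hζ.pow_inj ha hb (by simpa [r, mul_inv_eq_one₀, hζ0] using h))
    have hrL : r ^ L = 1 := by
      rw [mul_pow, inv_pow, ← pow_mul, ← pow_mul, mul_comm a, mul_comm b, pow_mul, pow_mul,
        hζ.pow_eq_one, one_pow, one_pow, inv_one, mul_one]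
    rw [geom_sum_eq hr1, hrL, sub_self, zero_div]

theorem IsPrimitiveRoot.sum_normSq_sum_mul_pow {ζ : ℂ} {L : ℕ} (hζ : IsPrimitiveRoot ζ L)
    {ι : Type*} [Fintype ι] (e : ι → ℕ) (he : ∀ p, e p < L) (c : ι → ℝ) :
    ∑ ℓ ∈ range L, normSq (∑ p, (c p : ℂ) * ζ ^ (ℓ * e p)) =
      L * ∑ p, ∑ r, if e p = e r then c p * c r else 0 := by
  apply Complex.ofReal_injective
  push_cast [apply_ite ((↑) : ℝ → ℂ), ofReal_zero]
  calc ∑ ℓ ∈ range L, (normSq (∑ p, (c p : ℂ) * ζ ^ (ℓ * e p)) : ℂ)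
      = ∑ p, ∑ r, (c p * c r : ℂ) * ∑ ℓ ∈ range L, ζ ^ (ℓ * e p) * conj (ζ ^ (ℓ * e r)) := by
        simp_rw [← Complex.mul_conj, map_sum, map_mul, conj_ofReal, sum_mul_sum, mul_sum]
        rw [sum_comm]
        refine sum_congr rfl fun p _ => ?_
        rw [sum_comm]
        exact sum_congr rfl fun r _ => sum_congr rfl fun ℓ _ => by ring
    _ = L * ∑ p, ∑ r, if e p = e r then (c p : ℂ) * c r else 0 := by
        simp_rw [hζ.sum_pow_mul_conj_pow (he _) (he _), mul_sum, mul_ite, mul_zero, mul_comm]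

theorem autocorr_eq_sum_ite (N : ℕ) (a : Fin N → ℝ) (τ : ℕ) :
    autocorr N a τ = ∑ n, ∑ m, if n.1 + τ = m.1 then a n * a m else 0 := by
  refine sum_congr rfl fun n _ => ?_
  split_ifs with h
  · have hm : ∀ m : Fin N, (n.1 + τ = m.1) ↔ ⟨n.1 + τ, h⟩ = m := fun m => by simp [Fin.ext_iff]
    simp_rw [hm, Fintype.sum_ite_eq]
  · exact (sum_eq_zero fun m _ => if_neg (by omega)).symm

theorem autocorr_dist_eq_sum_ite (N : ℕ) (a : Fin N → ℝ) (x y : ℕ) :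
    autocorr N a (Nat.dist x y) = ∑ n, ∑ m, if x + n.1 = y + m.1 then a n * a m else 0 := by
  rcases le_total x y with hxy | hyx
  · rw [Nat.dist_eq_sub_of_le hxy, autocorr_eq_sum_ite, sum_comm]
    refine sum_congr rfl fun m _ => sum_congr rfl fun n _ => ?_
    exact if_congr (by omega) (mul_comm _ _) rfl
  · rw [Nat.dist_comm, Nat.dist_eq_sub_of_le hyx, autocorr_eq_sum_ite]
    refine sum_congr rfl fun n _ => sum_congr rfl fun m _ => ?_
    exact if_congr (by omega) rfl rfl

theorem dotProduct_covToeplitz_mulVec (N M : ℕ) (a : Fin N → ℝ) (v : Fin M → ℝ) :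
    v ⬝ᵥ covToeplitz N M a *ᵥ v = ∑ p : Fin M × Fin N, ∑ r : Fin M × Fin N,
      if p.1.1 + p.2.1 = r.1.1 + r.2.1 then (v p.1 * a p.2) * (v r.1 * a r.2) else 0 := by
  simp only [Fintype.sum_prod_type, dotProduct, mulVec, covToeplitz, autocorr_dist_eq_sum_ite,
    mul_sum, sum_mul, mul_ite, ite_mul, mul_zero, zero_mul]
  refine sum_congr rfl fun i _ => ?_
  rw [sum_comm]
  exact sum_congr rfl fun n _ => sum_congr rfl fun j _ => sum_congr rfl fun m _ =>
    if_congr Iff.rfl (by ring) rfl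

/-- For `ζ = e^{-2πi/L}` and `n ≤ L`, `dft ζ x` is the length-`L` DFT of `x` padded with zeros,
i.e. `√L F_L x`. -/
noncomputable def dft {n : ℕ} (ζ : ℂ) (x : Fin n → ℝ) (ℓ : ℕ) : ℂ :=
  ∑ k, (x k : ℂ) * ζ ^ (ℓ * k)

theorem IsPrimitiveRoot.sum_normSq_dft {ζ : ℂ} {L n : ℕ} (hζ : IsPrimitiveRoot ζ L) (hn : n ≤ L)
    (x : Fin n → ℝ) : ∑ ℓ ∈ range L, normSq (dft ζ x ℓ) = L * ∑ k, x k ^ 2 := by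
  simp only [dft]
  rw [hζ.sum_normSq_sum_mul_pow (fun k : Fin n => k.1) (fun k => k.2.trans_le hn) x]
  simp [Fin.val_inj, sq]

theorem dft_mul_dft {M N : ℕ} (ζ : ℂ) (v : Fin M → ℝ) (a : Fin N → ℝ) (ℓ : ℕ) :
    dft ζ v ℓ * dft ζ a ℓ =
      ∑ p : Fin M × Fin N, ((v p.1 * a p.2 : ℝ) : ℂ) * ζ ^ (ℓ * (p.1.1 + p.2.1)) := by
  rw [dft, dft, sum_mul_sum, ← Fintype.sum_prod_type']
  refine sum_congr rfl fun p _ => ?_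
  push_cast
  ring

theorem IsPrimitiveRoot.mul_dotProduct_covToeplitz_mulVec {ζ : ℂ} {N M : ℕ}
    (hζ : IsPrimitiveRoot ζ (N + M - 1)) (a : Fin N → ℝ) (v : Fin M → ℝ) :
    (N + M - 1 : ℕ) * (v ⬝ᵥ covToeplitz N M a *ᵥ v) =
      ∑ ℓ ∈ range (N + M - 1), normSq (dft ζ v ℓ) * normSq (dft ζ a ℓ) := by
  simp_rw [← normSq_mul, dft_mul_dft]
  rw [hζ.sum_normSq_sum_mul_pow (fun p : Fin M × Fin N => p.1.1 + p.2.1)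
    (fun p => by have := p.1.2; have := p.2.2; omega), dotProduct_covToeplitz_mulVec]

theorem IsPrimitiveRoot.dotProduct_covToeplitz_mulVec_le {ζ : ℂ} {N M : ℕ} (hN : 1 ≤ N)
    (hM : 1 ≤ M) (hζ : IsPrimitiveRoot ζ (N + M - 1)) (a : Fin N → ℝ) {B : ℝ}
    (hB : ∀ ℓ < N + M - 1, normSq (dft ζ a ℓ) ≤ B) (v : Fin M → ℝ) :
    v ⬝ᵥ covToeplitz N M a *ᵥ v ≤ B * ∑ i, v i ^ 2 := by
  have hL : (0 : ℝ) < (N + M - 1 : ℕ) := Nat.cast_pos.2 (show 0 < N + M - 1 by omega)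
  refine le_of_mul_le_mul_left ?_ hL
  calc _ = ∑ ℓ ∈ range (N + M - 1), normSq (dft ζ v ℓ) * normSq (dft ζ a ℓ) :=
        hζ.mul_dotProduct_covToeplitz_mulVec a v
    _ ≤ ∑ ℓ ∈ range (N + M - 1), normSq (dft ζ v ℓ) * B :=
        sum_le_sum fun ℓ hℓ => mul_le_mul_of_nonneg_left (hB ℓ (mem_range.1 hℓ)) (normSq_nonneg _)
    _ = _ := by
        rw [← sum_mul, hζ.sum_normSq_dft (show M ≤ N + M - 1 by omega) v]
        ring

theorem Matrix.IsHermitian.eigenvalues_le_of_dotProduct_mulVec_le {n : Type*} [Fintype n]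
    [DecidableEq n] {A : Matrix n n ℝ} (hA : A.IsHermitian) {B : ℝ}
    (h : ∀ v, v ⬝ᵥ A *ᵥ v ≤ B * ∑ i, v i ^ 2) (i : n) : hA.eigenvalues i ≤ B := by
  have hv : ∑ j, hA.eigenvectorBasis i j ^ 2 = 1 := by
    rw [← EuclideanSpace.real_norm_sq_eq, hA.eigenvectorBasis.orthonormal.1 i, one_pow]
  simpa [hA.eigenvalues_eq i, hv] using h (hA.eigenvectorBasis i)

theorem sum_sq_mulVec_of_transpose_mul_self_eq_one {n : Type*} [Fintype n] [DecidableEq n]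
    {G : Matrix n n ℝ} (hG : Gᵀ * G = 1) (q : n → ℝ) : ∑ i, (G *ᵥ q) i ^ 2 = ∑ i, q i ^ 2 := by
  have h : (G *ᵥ q) ⬝ᵥ (G *ᵥ q) = q ⬝ᵥ q := by
    rw [dotProduct_mulVec, ← vecMul_transpose, vecMul_vecMul, hG, vecMul_one]
  simpa only [dotProduct, sq] using h

theorem norm_sum_ofReal_mul_sq_le {ι : Type*} (S : Finset ι) (q : ι → ℝ) (c : ι → ℂ) :
    ‖∑ s ∈ S, (q s : ℂ) * c s‖ ^ 2 ≤ (∑ s ∈ S, q s ^ 2) * ∑ s ∈ S, ‖c s‖ ^ 2 := by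
  calc ‖∑ s ∈ S, (q s : ℂ) * c s‖ ^ 2 ≤ (∑ s ∈ S, |q s| * ‖c s‖) ^ 2 := by
        gcongr
        refine (norm_sum_le _ _).trans_eq (sum_congr rfl fun s _ => ?_)
        rw [norm_mul, norm_real, Real.norm_eq_abs]
    _ ≤ (∑ s ∈ S, |q s| ^ 2) * ∑ s ∈ S, ‖c s‖ ^ 2 := sum_mul_sq_le_sq_mul_sq S _ _
    _ = (∑ s ∈ S, q s ^ 2) * ∑ s ∈ S, ‖c s‖ ^ 2 := by simp_rw [sq_abs]

theorem rowCohNorm_le_fourierCoherence {N M K : ℕ} (G : Matrix (Fin N) (Fin N) ℝ)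
    (i : Fin (N + M - 1)) {S : Finset (Fin N)} (hS : S.card = K) :
    rowCohNorm N M G i S ≤ fourierCoherence N M K G :=
  (le_ciSup (f := fun S : {S : Finset (Fin N) // S.card = K} => rowCohNorm N M G i S.1)
    (Set.finite_range _).bddAbove ⟨S, hS⟩).trans
    (le_ciSup (f := fun i => ⨆ S : {S : Finset (Fin N) // S.card = K}, rowCohNorm N M G i S.1)
      (Set.finite_range _).bddAbove i)

theorem norm_sum_dftEntry_mulVec_sq_le {N M K : ℕ} (hKN : K ≤ N) (G : Matrix (Fin N) (Fin N) ℝ)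
    {q : Fin N → ℝ} (hq : ∃ S : Finset (Fin N), S.card ≤ K ∧ ∀ i ∉ S, q i = 0)
    (i : Fin (N + M - 1)) :
    ‖∑ m : Fin N, dftEntry (N + M - 1) i m.1 * ((G *ᵥ q) m : ℂ)‖ ^ 2 ≤
      fourierCoherence N M K G ^ 2 * ∑ s, q s ^ 2 := by
  obtain ⟨S₀, hS₀K, hS₀⟩ := hq
  obtain ⟨S, hS₀S, -, hSK⟩ :=
    exists_subsuperset_card_eq (subset_univ S₀) hS₀K (by simpa using hKN)
  have hqS : ∀ s ∉ S, q s = 0 := fun s hs => hS₀ s fun h => hs (hS₀S h)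
  set c : Fin N → ℂ := fun s => ∑ m : Fin N, dftEntry (N + M - 1) i m.1 * (G m s : ℂ)
  have hsum : ∑ m : Fin N, dftEntry (N + M - 1) i m.1 * ((G *ᵥ q) m : ℂ) =
      ∑ s ∈ S, (q s : ℂ) * c s := by
    rw [sum_subset (subset_univ S) fun s _ hs => by simp [hqS s hs]]
    simp only [c, mulVec, dotProduct, ofReal_sum, ofReal_mul, mul_sum]
    rw [sum_comm]
    exact sum_congr rfl fun s _ => sum_congr rfl fun m _ => by ring
  have hc : ∑ s ∈ S, ‖c s‖ ^ 2 ≤ fourierCoherence N M K G ^ 2 := by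
    calc _ = √(∑ s ∈ S, ‖c s‖ ^ 2) ^ 2 := (Real.sq_sqrt (by positivity)).symm
      _ ≤ _ := pow_le_pow_left₀ (Real.sqrt_nonneg _) (rowCohNorm_le_fourierCoherence G i hSK) 2
  have hqS' : ∑ s ∈ S, q s ^ 2 = ∑ s, q s ^ 2 :=
    sum_subset (subset_univ S) fun s _ hs => by simp [hqS s hs]
  calc _ = ‖∑ s ∈ S, (q s : ℂ) * c s‖ ^ 2 := by rw [hsum]
    _ ≤ (∑ s ∈ S, q s ^ 2) * ∑ s ∈ S, ‖c s‖ ^ 2 := norm_sum_ofReal_mul_sq_le S q c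
    _ ≤ _ := by
        rw [hqS', mul_comm]
        gcongr

theorem normSq_dft_eq {L n : ℕ} (hL : L ≠ 0) (x : Fin n → ℝ) (ℓ : ℕ) :
    normSq (dft (cexp (-(2 * Real.pi * I / L))) x ℓ) =
      L * ‖∑ m : Fin n, dftEntry L ℓ m.1 * (x m : ℂ)‖ ^ 2 := by
  have hsqrt : (√L : ℂ) ≠ 0 := ofReal_ne_zero.2 (Real.sqrt_ne_zero'.2 (Nat.cast_pos.2 (by omega)))
  have hdft : dft (cexp (-(2 * Real.pi * I / L))) x ℓ =
      √L * ∑ m : Fin n, dftEntry L ℓ m.1 * (x m : ℂ) := by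
    rw [dft, mul_sum]
    refine sum_congr rfl fun m _ => ?_
    have hexp : cexp (-(2 * Real.pi * I / L)) ^ (ℓ * m.1) =
        cexp (-(2 * Real.pi * I * ℓ * m.1) / L) := by
      rw [← exp_nat_mul]
      congr 1
      push_cast
      ring
    rw [dftEntry, hexp]
    field_simp
  rw [hdft, normSq_mul, normSq_ofReal, Real.mul_self_sqrt (Nat.cast_nonneg L), normSq_eq_norm_sq]

theorem rho_deterministic_bound_general (N M K : ℕ) (hN : 1 ≤ N) (hM : 1 ≤ M)
    (hKN : K ≤ N)
    (G : Matrix (Fin N) (Fin N) ℝ) (hG : Gᵀ * G = 1)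
    (q : Fin N → ℝ)
    (hq : ∃ S : Finset (Fin N), S.card ≤ K ∧ ∀ i ∉ S, q i = 0)
    (a : Fin N → ℝ) (haq : a = G.mulVec q) (ha : a ≠ 0)
    (hP : (covToeplitz N M a).IsHermitian) :
    (⨆ i, hP.eigenvalues i) / ∑ i, (a i) ^ 2 ≤
      ((N + M - 1 : ℕ) : ℝ) * fourierCoherence N M K G ^ 2 := by
  have hL : N + M - 1 ≠ 0 := by omega
  have hζ : IsPrimitiveRoot (cexp (-(2 * Real.pi * I / (N + M - 1 : ℕ)))) (N + M - 1) := by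
    rw [Complex.exp_neg]
    exact (isPrimitiveRoot_exp _ hL).inv
  have ha_sq_pos : 0 < ∑ i, a i ^ 2 := (sum_nonneg fun i _ => sq_nonneg (a i)).lt_of_ne fun h =>
    ha (dotProduct_self_eq_zero.1 (by simpa only [dotProduct, sq] using h.symm))
  have hdft : ∀ ℓ < N + M - 1, normSq (dft (cexp (-(2 * Real.pi * I / (N + M - 1 : ℕ)))) a ℓ) ≤
      (N + M - 1 : ℕ) * fourierCoherence N M K G ^ 2 * ∑ i, a i ^ 2 := fun ℓ hℓ => by
    rw [normSq_dft_eq hL, mul_assoc, haq, sum_sq_mulVec_of_transpose_mul_self_eq_one hG]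
    gcongr
    exact norm_sum_dftEntry_mulVec_sq_le hKN G hq ⟨ℓ, hℓ⟩
  rw [div_le_iff₀ ha_sq_pos]
  exact Real.iSup_le (hP.eigenvalues_le_of_dotProduct_mulVec_le
    (hζ.dotProduct_covToeplitz_mulVec_le hN hM a hdft)) (by positivity)

theorem rho_deterministic_bound (N M K : ℕ) (hN : 1 ≤ N) (hM : 1 ≤ M)
    (hK1 : 1 ≤ K) (hKN : K ≤ N)
    (G : Matrix (Fin N) (Fin N) ℝ) (hG : Gᵀ * G = 1)
    (q : Fin N → ℝ)
    (hq : ∃ S : Finset (Fin N), S.card ≤ K ∧ ∀ i ∉ S, q i = 0)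
    (a : Fin N → ℝ) (haq : a = G.mulVec q) (ha : a ≠ 0)
    (hP : (covToeplitz N M a).IsHermitian) :
    (⨆ i, hP.eigenvalues i) / ∑ i, (a i) ^ 2 ≤
      ((N + M - 1 : ℕ) : ℝ) * fourierCoherence N M K G ^ 2 :=
  rho_deterministic_bound_general N M K hN hM hKN G hG q hq a haq ha hP
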